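/- Assume f satisfies hypotheses (H1)–(H3) with b = 1 and a ∈ [−3/2, 0), and let x be a solution of x'(t) = f(t,x_t) with m = liminf_{t→∞} x(t) < 0 < M = limsup_{t→∞} x(t), where r(x) = ax/(1+x). Then M ≤ r(m). Moreover, if a ∈ [−3/2, −5/4], then M < R(m), where R(x) = (A'(0))² x/(A'(0) − (A''(0)/2)x) with A'(0) = a + 1/2 and A''(0) = −(2a + 1/3). -/

import Mathlib

open Set Filter MeasureTheory Topology

/-- The Yorke functional 𝓜(φ) = max{0, max_{s ∈ [-1,0]} φ(s)}. -/
noncomputable def yorkeM (φ : ℝ → ℝ) : ℝ := max 0 (sSup (φ '' Icc (-1 : ℝ) 0))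

/-- Membership in the phase space C = C([-1,0], ℝ): we work with functions
ℝ → ℝ whose restriction to [-1,0] is continuous (only values on [-1,0] matter). -/
def InC (φ : ℝ → ℝ) : Prop := ContinuousOn φ (Icc (-1 : ℝ) 0)

/-- The segment x_t(s) = x(t+s), s ∈ [-1,0]. -/
def seg (x : ℝ → ℝ) (t : ℝ) : ℝ → ℝ := fun s => x (t + s)

/-- Carathéodory condition: measurable in t for fixed φ, continuous in φ
(w.r.t. uniform distance on [-1,0]) for fixed t, locally dominated by an
integrable function. -/
def Caratheodory (f : ℝ → (ℝ → ℝ) → ℝ) : Prop :=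
  (∀ φ, InC φ → Measurable fun t => f t φ) ∧
  (∀ t : ℝ, ∀ φ, InC φ → ∀ ε : ℝ, 0 < ε → ∃ δ : ℝ, 0 < δ ∧ ∀ ψ, InC ψ →
      (∀ s ∈ Icc (-1 : ℝ) 0, |ψ s - φ s| ≤ δ) → |f t ψ - f t φ| ≤ ε) ∧
  (∀ t : ℝ, ∀ φ, InC φ → ∃ δ : ℝ, 0 < δ ∧ ∃ m : ℝ → ℝ,
      IntegrableOn m (Icc (t - δ) (t + δ)) ∧
      ∀ s ∈ Icc (t - δ) (t + δ), ∀ ψ, InC ψ →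
        (∀ u ∈ Icc (-1 : ℝ) 0, |ψ u - φ u| ≤ δ) → |f s ψ| ≤ m s)

/-- (H1): f is Carathéodory and for every q there is ϑ(q) ≥ 0 dominating f(t,φ)
a.e. in t whenever φ ≥ q on [-1,0]. -/
def HypH1 (f : ℝ → (ℝ → ℝ) → ℝ) (θ : ℝ → ℝ) : Prop :=
  Caratheodory f ∧
  ∀ q : ℝ, 0 ≤ θ q ∧
    ∀ φ, InC φ → (∀ s ∈ Icc (-1 : ℝ) 0, q ≤ φ s) →
      ∀ᵐ t : ℝ ∂volume, f t φ ≤ θ q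

/-- (H2), the generalized Yorke condition with r(x) = ax/(1+bx):
r(𝓜(φ)) ≤ f(t,φ) for all φ, and f(t,φ) ≤ r(-𝓜(-φ)) for all φ with
min φ > -1/b (which is automatic when b = 0, since then b·φ(s) > -1 always). -/
def HypH2 (f : ℝ → (ℝ → ℝ) → ℝ) (a b : ℝ) : Prop :=
  (∀ t : ℝ, ∀ φ, InC φ → a * yorkeM φ / (1 + b * yorkeM φ) ≤ f t φ) ∧
  (∀ t : ℝ, ∀ φ, InC φ → (∀ s ∈ Icc (-1 : ℝ) 0, -1 < b * φ s) →
      f t φ ≤ a * (-yorkeM fun s => -φ s) / (1 + b * (-yorkeM fun s => -φ s)))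

/-- (H3): ∫₀^∞ f(s, p_s) ds diverges for every continuous p having a nonzero
limit at infinity. -/
def HypH3 (f : ℝ → (ℝ → ℝ) → ℝ) : Prop :=
  ∀ p : ℝ → ℝ, ContinuousOn p (Ici (-1 : ℝ)) → ∀ L : ℝ, L ≠ 0 →
    Tendsto p atTop (𝓝 L) →
    ¬∃ I : ℝ, Tendsto (fun T => ∫ s in (0 : ℝ)..T, f s (seg p s)) atTop (𝓝 I)

/-- A solution of x'(t) = f(t, x_t) on [α-1, ω) (with ω ∈ (α, +∞]) with initial
time α: continuous on [α-1, ω) and satisfying the equivalent integral equation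
(absolute continuity plus a.e. differential equation) on [α, ω). -/
def IsSolOn (f : ℝ → (ℝ → ℝ) → ℝ) (α : ℝ) (ω : EReal) (x : ℝ → ℝ) : Prop :=
  (α : EReal) < ω ∧
  ContinuousOn x {t : ℝ | α - 1 ≤ t ∧ (t : EReal) < ω} ∧
  ∀ t : ℝ, α ≤ t → (t : EReal) < ω →
    IntervalIntegrable (fun s => f s (seg x s)) volume α t ∧
    x t = x α + ∫ s in α..t, f s (seg x s)

/-- A solution on its maximal interval of existence [α-1, ω): it admits no
extension to any strictly larger interval [α-1, ω'). -/
def IsMaximalSolOn (f : ℝ → (ℝ → ℝ) → ℝ) (α : ℝ) (ω : EReal) (x : ℝ → ℝ) : Prop :=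
  IsSolOn f α ω x ∧
  ∀ ω' : EReal, ω < ω' → ∀ y : ℝ → ℝ, IsSolOn f α ω' y →
    ¬∀ t : ℝ, α - 1 ≤ t → (t : EReal) < ω → y t = x t

/-- A (global) solution of x'(t) = f(t, x_t) on [α-1, +∞). -/
def IsGlobalSol (f : ℝ → (ℝ → ℝ) → ℝ) (α : ℝ) (x : ℝ → ℝ) : Prop :=
  ContinuousOn x (Ici (α - 1)) ∧
  ∀ t : ℝ, α ≤ t →
    IntervalIntegrable (fun s => f s (seg x s)) volume α t ∧
    x t = x α + ∫ s in α..t, f s (seg x s)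

/-! Write `r y = a y / (1 + y)`, decreasing on `(-1, ∞)`. Fix `m' ∈ (-1, m)`. Eventually
`x ≥ m'`, so by (H2) `x' ≤ r m' =: K`; at the last zero `z` of `x` before a late positive time `t`
this gives `x s ≥ -K (z - s)` on `[z - 1, z]`, hence every segment `x_u`, `u ∈ [z, t]`, is bounded
below by `max m' (-K (z + 1 - u)⁺)` and `x t ≤ ∫₀¹ r (max m' (-K v)) dv`. This integral is at most
`r m'` and, for `a ≤ -1`, at most `Ψ m'` (bound `r` on `[m', 0]` by a cubic). Letting `m' → m`
gives both claims once `m > -1`, which comes from the mirror argument: with `M' > M` and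
`K = -r M'`, `m ≥ ∫₀¹ r (K v) dv ≥ a K / (2 + K) ≥ -a² / (2 - a) > -1`, the middle step being
Jensen's inequality for the concave `v ↦ K v / (1 + K v)`. -/

lemma le_of_forall_Ioo_le_of_continuousAt {G : ℝ → ℝ} {c m M : ℝ} (hcm : c < m)
    (hG : ContinuousAt G m) (h : ∀ y ∈ Ioo c m, M ≤ G y) : M ≤ G m :=
  ge_of_tendsto (hG.tendsto.mono_left nhdsWithin_le_nhds)
    (mem_of_superset (Ioo_mem_nhdsLT hcm) h)

lemma exists_eq_zero_forall_nonpos_Icc {x : ℝ → ℝ} {s t : ℝ} (hst : s ≤ t)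
    (hx : ContinuousOn x (Icc s t)) (hs : 0 ≤ x s) (ht : x t ≤ 0) :
    ∃ z ∈ Icc s t, x z = 0 ∧ ∀ u ∈ Icc z t, x u ≤ 0 := by
  set S := Icc s t ∩ x ⁻¹' Ici 0
  have hsS : s ∈ S := ⟨⟨le_rfl, hst⟩, hs⟩
  have hSbdd : BddAbove S := ⟨t, fun u hu => hu.1.2⟩
  have hzS : sSup S ∈ S :=
    (hx.preimage_isClosed_of_isClosed isClosed_Icc isClosed_Ici).csSup_mem ⟨s, hsS⟩ hSbdd
  have hlt : ∀ u ∈ Ioc (sSup S) t, x u < 0 := fun u hu => not_le.1 fun h =>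
    hu.1.not_ge (le_csSup hSbdd ⟨⟨(hzS.1.1.trans hu.1.le), hu.2⟩, h⟩)
  have hz0 : x (sSup S) = 0 := by
    refine le_antisymm ?_ hzS.2
    rcases hzS.1.2.eq_or_lt with hzt | hzt
    · exact hzt ▸ ht
    · have hcont : ContinuousWithinAt x (Ioi (sSup S)) (sSup S) :=
        (hx.continuousWithinAt hzS.1).mono_of_mem_nhdsWithin <| mem_of_superset
          (Ioc_mem_nhdsGT hzt) (Ioc_subset_Icc_self.trans (Icc_subset_Icc hzS.1.1 le_rfl))
      exact le_of_tendsto hcont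
        (mem_of_superset (Ioc_mem_nhdsGT hzt) fun u hu => (hlt u hu).le)
  refine ⟨sSup S, hzS.1, hz0, fun u hu => ?_⟩
  rcases hu.1.eq_or_lt with h | h
  · exact (h ▸ hz0).le
  · exact (hlt u ⟨h, hu.2⟩).le

lemma integral_le_of_nonneg_of_eq_zero_on_Ici {g : ℝ → ℝ} {z w t : ℝ} (hg : Continuous g)
    (hzt : z ≤ t) (hnn : ∀ u, z ≤ u → 0 ≤ g u) (h0 : ∀ u, w ≤ u → g u = 0) :
    ∫ u in z..t, g u ≤ ∫ u in z..w, g u := by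
  calc ∫ u in z..t, g u ≤ ∫ u in z..max t w, g u :=
        intervalIntegral.integral_mono_interval le_rfl hzt (le_max_left t w)
          (ae_restrict_of_forall_mem measurableSet_Ioc fun u hu => hnn u hu.1.le)
          (hg.intervalIntegrable _ _)
    _ = ∫ u in z..w, g u := by
        have htail : ∫ u in w..max t w, g u = 0 := by
          rw [intervalIntegral.integral_congr (g := fun _ => (0:ℝ)) fun u hu => h0 u ?_]
          · simp
          · rw [uIcc_of_le (le_max_right t w)] at hu; exact hu.1
        rw [← intervalIntegral.integral_add_adjacent_intervals (hg.intervalIntegrable z w)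
          (hg.intervalIntegrable w (max t w)), htail, add_zero]

lemma integral_comp_max_sub_zero (h : ℝ → ℝ) (z : ℝ) :
    ∫ u in z..z + 1, h (max (z + 1 - u) 0) = ∫ v in (0:ℝ)..1, h v := by
  rw [intervalIntegral.integral_comp_sub_left (fun v => h (max v 0)), sub_self,
    add_sub_cancel_left]
  exact intervalIntegral.integral_congr fun v hv => by
    rw [uIcc_of_le zero_le_one] at hv; simp only [max_eq_left hv.1]

lemma integral_cubic (c p q r w : ℝ) :
    ∫ v in (0:ℝ)..w, (c + p * v + q * v ^ 2 + r * v ^ 3) =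
      c * w + p * w ^ 2 / 2 + q * w ^ 3 / 3 + r * w ^ 4 / 4 := by
  rw [intervalIntegral.integral_eq_sub_of_hasDerivAt
    (f := fun v => c * v + p * v ^ 2 / 2 + q * v ^ 3 / 3 + r * v ^ 4 / 4)
    (fun v _ => ?_) (Continuous.intervalIntegrable (by fun_prop) _ _)]
  · ring
  · convert ((((hasDerivAt_id v).const_mul c).add ((hasDerivAt_pow 2 v).const_mul (p / 2))).add
      ((hasDerivAt_pow 3 v).const_mul (q / 3))).add ((hasDerivAt_pow 4 v).const_mul (r / 4))
      using 1
    · ext v; simp only [id, Pi.add_apply]; ring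
    · push_cast; ring

noncomputable def yorkeR (a y : ℝ) : ℝ := a * y / (1 + y)

lemma yorkeR_zero (a : ℝ) : yorkeR a 0 = 0 := by simp [yorkeR]

lemma yorkeR_antitoneOn {a : ℝ} (ha : a ≤ 0) : AntitoneOn (yorkeR a) (Ioi (-1)) := by
  intro p hp q hq hpq
  rw [mem_Ioi] at hp hq
  rw [yorkeR, yorkeR, div_le_div_iff₀ (by linarith) (by linarith)]
  nlinarith

lemma continuousOn_yorkeR (a : ℝ) : ContinuousOn (yorkeR a) (Ioi (-1)) :=
  ContinuousOn.div (by fun_prop) (by fun_prop) fun y hy => by rw [mem_Ioi] at hy; linarith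

lemma yorkeR_nonpos {a y : ℝ} (ha : a ≤ 0) (hy : 0 ≤ y) : yorkeR a y ≤ 0 :=
  yorkeR_zero a ▸ yorkeR_antitoneOn ha (by norm_num : (0:ℝ) ∈ Ioi (-1))
    (show y ∈ Ioi (-1) by rw [mem_Ioi]; linarith) hy

lemma yorkeR_nonneg {a y : ℝ} (ha : a ≤ 0) (hy₁ : -1 < y) (hy₀ : y ≤ 0) : 0 ≤ yorkeR a y :=
  yorkeR_zero a ▸ yorkeR_antitoneOn ha hy₁ (by norm_num : (0:ℝ) ∈ Ioi (-1)) hy₀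

lemma continuous_yorkeR_max {a m : ℝ} (hm : -1 < m) (K : ℝ) :
    Continuous fun v => yorkeR a (max m (-K * v)) :=
  (continuousOn_yorkeR a).comp_continuous (by fun_prop)
    fun _ => hm.trans_le (le_max_left _ _)

lemma integral_yorkeR_nonpos {a : ℝ} (ha : a ≤ 0) {K : ℝ} (hK : 0 ≤ K) :
    ∫ v in (0:ℝ)..1, yorkeR a (K * v) ≤ 0 := by
  have := intervalIntegral.integral_nonneg (f := fun v => -yorkeR a (K * v)) (μ := volume)
    zero_le_one fun v hv => neg_nonneg.2 (yorkeR_nonpos ha (mul_nonneg hK hv.1))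
  rwa [intervalIntegral.integral_neg, neg_nonneg] at this

lemma integral_yorkeR_max_nonneg {a m : ℝ} (ha : a ≤ 0) (hm₁ : -1 < m) (hm₀ : m ≤ 0) {K : ℝ}
    (hK : 0 ≤ K) : 0 ≤ ∫ v in (0:ℝ)..1, yorkeR a (max m (-K * v)) :=
  intervalIntegral.integral_nonneg zero_le_one fun v hv =>
    yorkeR_nonneg ha (hm₁.trans_le (le_max_left _ _)) (max_le hm₀ (by nlinarith [hv.1]))

lemma mul_div_le_integral_yorkeR_mul {a K : ℝ} (ha : a ≤ 0) (hK : 0 ≤ K) :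
    a * K / (2 + K) ≤ ∫ v in (0:ℝ)..1, yorkeR a (K * v) := by
  set c := 1 + K / 2
  have hc : 0 < c := by positivity
  -- tangent line at `y = c` of the convex function `y ↦ 1 / y`, evaluated at `y = 1 + K v`
  have htangent : ∀ v ∈ Icc (0:ℝ) 1,
      a * (1 - 2 / c + 1 / c ^ 2) + a * K / c ^ 2 * v ≤ yorkeR a (K * v) := by
    intro v hv
    have hy : 0 < 1 + K * v := by nlinarith [hv.1]
    have key : yorkeR a (K * v) - (a * (1 - 2 / c + 1 / c ^ 2) + a * K / c ^ 2 * v) =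
        -a * (1 + K * v - c) ^ 2 / ((1 + K * v) * c ^ 2) := by
      rw [yorkeR]; field_simp; ring
    have : 0 ≤ -a * (1 + K * v - c) ^ 2 / ((1 + K * v) * c ^ 2) :=
      div_nonneg (mul_nonneg (neg_nonneg.2 ha) (sq_nonneg _)) (by positivity)
    linarith
  calc a * K / (2 + K) = ∫ v in (0:ℝ)..1,
        (a * (1 - 2 / c + 1 / c ^ 2) + a * K / c ^ 2 * v + 0 * v ^ 2 + 0 * v ^ 3) := by
        rw [integral_cubic]; field_simp; ring
    _ ≤ ∫ v in (0:ℝ)..1, yorkeR a (K * v) := by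
        refine intervalIntegral.integral_mono_on zero_le_one
          (Continuous.intervalIntegrable (by fun_prop) _ _) ?_ fun v hv => ?_
        · refine ((continuousOn_yorkeR a).comp (by fun_prop) fun v hv => ?_).intervalIntegrable
          rw [uIcc_of_le zero_le_one] at hv
          exact show -1 < K * v by nlinarith [hv.1]
        · simpa using htangent v hv

lemma neg_sq_div_le_integral_yorkeR_ramp {a M : ℝ} (ha : a ≤ 0) (hM : 0 ≤ M) :
    -a ^ 2 / (2 - a) ≤ ∫ v in (0:ℝ)..1, yorkeR a (-yorkeR a M * v) := by
  set K := -yorkeR a M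
  have hK : 0 ≤ K := neg_nonneg.2 (yorkeR_nonpos ha hM)
  have hKa : K ≤ -a := by
    simp only [K, yorkeR, neg_le_neg_iff]
    rw [le_div_iff₀ (by linarith)]; nlinarith
  refine le_trans ?_ (mul_div_le_integral_yorkeR_mul ha hK)
  rw [div_le_div_iff₀ (by linarith) (by linarith)]
  nlinarith [mul_nonneg hK (neg_nonneg.2 ha)]

lemma neg_one_lt_of_neg_sq_div_le {a m : ℝ} (ha₁ : -2 < a) (ha₂ : a < 1)
    (hm : -a ^ 2 / (2 - a) ≤ m) : -1 < m := by
  rw [div_le_iff₀ (by linarith)] at hm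
  nlinarith

lemma integral_yorkeR_max_le_yorkeR {a m : ℝ} (ha : a ≤ 0) (hm : -1 < m) (K : ℝ) :
    ∫ v in (0:ℝ)..1, yorkeR a (max m (-K * v)) ≤ yorkeR a m := by
  calc ∫ v in (0:ℝ)..1, yorkeR a (max m (-K * v)) ≤ ∫ _ in (0:ℝ)..1, yorkeR a m :=
        intervalIntegral.integral_mono_on zero_le_one
          ((continuous_yorkeR_max hm K).intervalIntegrable _ _) intervalIntegrable_const
          fun v _ => yorkeR_antitoneOn ha hm (hm.trans_le (le_max_left _ _)) (le_max_left _ _)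
    _ = yorkeR a m := by simp

/-- `∫₀¹ P (max m (-r m · v)) dv` for the cubic majorant `P y = a (y - y² + y³ / (1 + m))` of `r`
on `[m, 0]` (see `integral_yorkeR_max_le_yorkePsi`). -/
noncomputable def yorkePsi (a m : ℝ) : ℝ :=
  a * m + m * (1 + m) / 2 - a * m ^ 2 - 2 / 3 * m ^ 2 * (1 + m) + a * m ^ 3 / (1 + m)
    + 3 / 4 * m ^ 3

lemma integral_yorkeR_max_le_yorkePsi {a m : ℝ} (ha : a ≤ -1) (hm₁ : -1 < m) (hm₀ : m < 0) :
    ∫ v in (0:ℝ)..1, yorkeR a (max m (-yorkeR a m * v)) ≤ yorkePsi a m := by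
  set K := yorkeR a m
  have h1m : 0 < 1 + m := by linarith
  have hK : 0 < K := div_pos (by nlinarith) h1m
  set v₁ := -(1 + m) / a
  have hv₁0 : 0 ≤ v₁ := div_nonneg_of_nonpos (by linarith) (by linarith)
  have hv₁1 : v₁ ≤ 1 := by rw [div_le_one_of_neg (by linarith)]; linarith
  have hKv₁ : K * v₁ = -m := by
    have : a ≠ 0 := by linarith
    simp only [K, v₁, yorkeR]; field_simp
  set P : ℝ → ℝ := fun y => a * (y - y ^ 2 + y ^ 3 / (1 + m))
  have hP : Continuous fun v => P (max m (-K * v)) := by fun_prop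
  have hrP : ∀ y ∈ Icc m 0, yorkeR a y ≤ P y := by
    intro y hy
    have h1y : 0 < 1 + y := by linarith [hy.1]
    have hy3 : y ^ 3 ≤ 0 := Odd.pow_nonpos (by decide) hy.2
    have hsplit : yorkeR a y = a * (y - y ^ 2 + y ^ 3 / (1 + y)) := by
      rw [yorkeR]; field_simp; ring
    have hcube : y ^ 3 / (1 + m) ≤ y ^ 3 / (1 + y) := by
      rw [div_le_div_iff₀ h1m h1y]; nlinarith [hy.1]
    rw [hsplit]
    exact mul_le_mul_of_nonpos_left (by linarith) (by linarith)
  have hramp : ∫ v in (0:ℝ)..v₁, P (max m (-K * v)) =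
      -(a * K) * v₁ ^ 2 / 2 - a * K ^ 2 * v₁ ^ 3 / 3 - a * K ^ 3 / (1 + m) * v₁ ^ 4 / 4 := by
    rw [intervalIntegral.integral_congr (g := fun v => 0 + -(a * K) * v + -(a * K ^ 2) * v ^ 2
      + -(a * K ^ 3 / (1 + m)) * v ^ 3) fun v hv => ?_, integral_cubic]
    · ring
    rw [uIcc_of_le hv₁0] at hv
    have : m ≤ -K * v := by nlinarith [hv.2, hKv₁]
    simp only [P, max_eq_right this]; ring
  have hflat : ∫ v in v₁..1, P (max m (-K * v)) = (1 - v₁) * P m := by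
    rw [intervalIntegral.integral_congr (g := fun _ => P m) fun v hv => ?_]
    · simp
    rw [uIcc_of_le hv₁1] at hv
    have : -K * v ≤ m := by nlinarith [hv.1, hKv₁]
    simp only [max_eq_left this]
  calc ∫ v in (0:ℝ)..1, yorkeR a (max m (-K * v)) ≤ ∫ v in (0:ℝ)..1, P (max m (-K * v)) :=
        intervalIntegral.integral_mono_on zero_le_one
          ((continuous_yorkeR_max hm₁ K).intervalIntegrable _ _) (hP.intervalIntegrable _ _)
          fun v hv => hrP _ ⟨le_max_left _ _, max_le hm₀.le (by nlinarith [hv.1])⟩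
    _ = yorkePsi a m := by
        rw [← intervalIntegral.integral_add_adjacent_intervals (hP.intervalIntegrable 0 v₁)
          (hP.intervalIntegrable v₁ 1), hramp, hflat]
        have : a ≠ 0 := by linarith
        simp only [P, K, v₁, yorkeR, yorkePsi]
        field_simp
        ring

lemma yorkePsi_lt {a m : ℝ} (ha₁ : -(3 / 2) ≤ a) (ha₂ : a ≤ -(5 / 4))
    (hm : -a ^ 2 / (2 - a) ≤ m) (hm₀ : m < 0) :
    yorkePsi a m < (a + 1 / 2) ^ 2 * m / ((a + 1 / 2) - (-(2 * a + 1 / 3) / 2) * m) := by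
  have h1m : 0 < 1 + m := by linarith [neg_one_lt_of_neg_sq_div_le (by linarith) (by linarith) hm]
  have hm' : -a ^ 2 ≤ m * (2 - a) := by rwa [div_le_iff₀ (by linarith)] at hm
  have hD : (a + 1 / 2) - (-(2 * a + 1 / 3) / 2) * m < 0 := by
    nlinarith [mul_le_mul_of_nonpos_left hm' (by linarith : a + 1 / 6 ≤ 0),
      mul_nonneg (by linarith : (0:ℝ) ≤ a + 3 / 2) (by linarith : (0:ℝ) ≤ -(5 / 4) - a)]
  have hW : 1 / 72 + a / 4 + m / 36 + m ^ 2 / 72 + a * m ^ 2 / 12 < 0 := by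
    nlinarith [mul_nonneg (sq_nonneg m) (by linarith : (0:ℝ) ≤ -1 / 72 - a / 12)]
  set W := 1 / 72 + a / 4 + m / 36 + m ^ 2 / 72 + a * m ^ 2 / 12
  have key : yorkePsi a m * ((a + 1 / 2) - (-(2 * a + 1 / 3) / 2) * m) - (a + 1 / 2) ^ 2 * m =
      m ^ 3 * W / (1 + m) := by
    simp only [yorkePsi, W]; field_simp; ring
  have : 0 < m ^ 3 * W / (1 + m) :=
    div_pos (mul_pos_of_neg_of_neg (Odd.pow_neg (by decide) hm₀) hW) h1m
  rw [lt_div_iff_of_neg hD]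
  linarith

lemma yorkeM_nonneg (φ : ℝ → ℝ) : 0 ≤ yorkeM φ := le_max_left _ _

lemma InC_seg {x : ℝ → ℝ} {α u : ℝ} (hx : ContinuousOn x (Ici (α - 1))) (hu : α ≤ u) :
    InC (seg x u) :=
  hx.comp (by fun_prop) fun s hs => by rw [mem_Ici]; linarith [hs.1]

lemma yorkeM_seg_le {x : ℝ → ℝ} {u B : ℝ} (hB : 0 ≤ B) (h : ∀ s ∈ Icc (u - 1) u, x s ≤ B) :
    yorkeM (seg x u) ≤ B := by
  refine max_le hB (csSup_le ((nonempty_Icc.2 (by norm_num)).image _) ?_)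
  rintro _ ⟨s, hs, rfl⟩
  exact h (u + s) ⟨by linarith [hs.1], by linarith [hs.2]⟩

lemma le_neg_yorkeM_neg_seg {x : ℝ → ℝ} {u c : ℝ} (hc : c ≤ 0)
    (h : ∀ s ∈ Icc (u - 1) u, c ≤ x s) : c ≤ -yorkeM fun s => -seg x u s := by
  have := yorkeM_seg_le (x := fun s => -x s) (neg_nonneg.2 hc) fun s hs => neg_le_neg (h s hs)
  exact le_neg_of_le_neg this

namespace HypH2

variable {f : ℝ → (ℝ → ℝ) → ℝ} {a α u : ℝ} {x : ℝ → ℝ}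

lemma yorkeR_le_apply_seg (h2 : HypH2 f a 1) (ha : a ≤ 0) (hx : ContinuousOn x (Ici (α - 1)))
    (hu : α ≤ u) {B : ℝ} (hB : 0 ≤ B) (h : ∀ s ∈ Icc (u - 1) u, x s ≤ B) :
    yorkeR a B ≤ f u (seg x u) := by
  have h21 := h2.1 u _ (InC_seg hx hu)
  rw [one_mul] at h21
  exact (yorkeR_antitoneOn ha (show yorkeM (seg x u) ∈ Ioi (-1) by
    rw [mem_Ioi]; linarith [yorkeM_nonneg (seg x u)])
    (show B ∈ Ioi (-1) by rw [mem_Ioi]; linarith) (yorkeM_seg_le hB h)).trans h21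

lemma apply_seg_le_yorkeR (h2 : HypH2 f a 1) (ha : a ≤ 0) (hx : ContinuousOn x (Ici (α - 1)))
    (hu : α ≤ u) {c : ℝ} (hc₁ : -1 < c) (hc₀ : c ≤ 0) (h : ∀ s ∈ Icc (u - 1) u, c ≤ x s) :
    f u (seg x u) ≤ yorkeR a c := by
  have h22 := h2.2 u _ (InC_seg hx hu) fun s hs => by
    rw [one_mul]; exact hc₁.trans_le (h (u + s) ⟨by linarith [hs.1], by linarith [hs.2]⟩)
  rw [one_mul] at h22
  have hc := le_neg_yorkeM_neg_seg hc₀ h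
  exact h22.trans (yorkeR_antitoneOn ha hc₁ (hc₁.trans_le hc) hc)

end HypH2

namespace IsGlobalSol

variable {f : ℝ → (ℝ → ℝ) → ℝ} {a α : ℝ} {x : ℝ → ℝ}

lemma sub_eq_integral {s t : ℝ} (hx : IsGlobalSol f α x) (hs : α ≤ s) (hst : s ≤ t) :
    IntervalIntegrable (fun u => f u (seg x u)) volume s t ∧
      x t - x s = ∫ u in s..t, f u (seg x u) := by
  obtain ⟨hIs, hes⟩ := hx.2 s hs
  obtain ⟨hIt, het⟩ := hx.2 t (hs.trans hst)
  have hI : IntervalIntegrable (fun u => f u (seg x u)) volume s t :=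
    (hIs.symm.trans hIt)
  refine ⟨hI, ?_⟩
  rw [← intervalIntegral.integral_interval_sub_left hIt hIs, het, hes]
  ring

lemma integral_le_sub {s t : ℝ} (hx : IsGlobalSol f α x) (hs : α ≤ s) (hst : s ≤ t) {g : ℝ → ℝ}
    (hg : IntervalIntegrable g volume s t) (h : ∀ u ∈ Icc s t, g u ≤ f u (seg x u)) :
    ∫ u in s..t, g u ≤ x t - x s := by
  obtain ⟨hI, he⟩ := hx.sub_eq_integral hs hst
  exact he ▸ intervalIntegral.integral_mono_on hst hg hI h

lemma sub_le_integral {s t : ℝ} (hx : IsGlobalSol f α x) (hs : α ≤ s) (hst : s ≤ t) {g : ℝ → ℝ}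
    (hg : IntervalIntegrable g volume s t) (h : ∀ u ∈ Icc s t, f u (seg x u) ≤ g u) :
    x t - x s ≤ ∫ u in s..t, g u := by
  obtain ⟨hI, he⟩ := hx.sub_eq_integral hs hst
  exact he ▸ intervalIntegral.integral_mono_on hst hI hg h

lemma integral_yorkeR_ramp_le (hx : IsGlobalSol f α x) (h2 : HypH2 f a 1) (ha : a ≤ 0)
    {M z t : ℝ} (hM : 0 ≤ M) (hz : α + 1 ≤ z) (hzt : z ≤ t)
    (hxM : ∀ u ∈ Icc (z - 2) z, x u ≤ M) (hxz : x z = 0) (hneg : ∀ u ∈ Icc z t, x u ≤ 0) :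
    ∫ v in (0:ℝ)..1, yorkeR a (-yorkeR a M * v) ≤ x t := by
  set K := -yorkeR a M
  have hK : 0 ≤ K := neg_nonneg.2 (yorkeR_nonpos ha hM)
  have hslope : ∀ s ∈ Icc (z - 1) z, x s ≤ K * (z - s) := by
    intro s hs
    have := hx.integral_le_sub (by linarith [hs.1]) hs.2 intervalIntegrable_const
      fun u hu => h2.yorkeR_le_apply_seg ha hx.1 (by linarith [hu.1, hs.1]) hM
        fun v hv => hxM v ⟨by linarith [hv.1, hu.1, hs.1], by linarith [hv.2, hu.2]⟩
    rw [intervalIntegral.integral_const, smul_eq_mul] at this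
    linarith
  set g : ℝ → ℝ := fun u => yorkeR a (K * max (z + 1 - u) 0)
  have hg : Continuous g := (continuousOn_yorkeR a).comp_continuous (by fun_prop)
    fun u => by rw [mem_Ioi]; linarith [mul_nonneg hK (le_max_right (z + 1 - u) 0)]
  have hgf : ∀ u ∈ Icc z t, g u ≤ f u (seg x u) := by
    intro u hu
    refine h2.yorkeR_le_apply_seg ha hx.1 (by linarith [hu.1]) (by positivity) fun s hs => ?_
    rcases le_or_gt s z with hsz | hsz
    · calc x s ≤ K * (z - s) := hslope s ⟨by linarith [hs.1, hu.1], hsz⟩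
        _ ≤ K * max (z + 1 - u) 0 :=
          mul_le_mul_of_nonneg_left (le_max_of_le_left (by linarith [hs.1])) hK
    · exact (hneg s ⟨hsz.le, hs.2.trans hu.2⟩).trans (by positivity)
  have hg_tail : ∫ u in z..z + 1, g u ≤ ∫ u in z..t, g u := by
    have := integral_le_of_nonneg_of_eq_zero_on_Ici (g := fun u => -g u) hg.neg hzt
      (fun u _ => neg_nonneg.2 (yorkeR_nonpos ha (by positivity)))
      (w := z + 1) fun u hu => by simp [g, max_eq_right (sub_nonpos.2 hu), yorkeR_zero]
    simpa only [intervalIntegral.integral_neg, neg_le_neg_iff] using this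
  calc ∫ v in (0:ℝ)..1, yorkeR a (K * v) = ∫ u in z..z + 1, g u :=
        (integral_comp_max_sub_zero (fun v => yorkeR a (K * v)) z).symm
    _ ≤ ∫ u in z..t, g u := hg_tail
    _ ≤ x t - x z := hx.integral_le_sub (by linarith) hzt (hg.intervalIntegrable _ _) hgf
    _ = x t := by rw [hxz, sub_zero]

lemma le_integral_yorkeR_max_ramp (hx : IsGlobalSol f α x) (h2 : HypH2 f a 1) (ha : a ≤ 0)
    {m z t : ℝ} (hm₁ : -1 < m) (hm₀ : m ≤ 0) (hz : α + 1 ≤ z) (hzt : z ≤ t)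
    (hxm : ∀ u ∈ Icc (z - 2) t, m ≤ x u) (hxz : x z = 0) (hpos : ∀ u ∈ Icc z t, 0 ≤ x u) :
    x t ≤ ∫ v in (0:ℝ)..1, yorkeR a (max m (-yorkeR a m * v)) := by
  set K := yorkeR a m
  have hK : 0 ≤ K := yorkeR_nonneg ha hm₁ hm₀
  have hseg : ∀ u ∈ Icc (z - 1) t, ∀ s ∈ Icc (u - 1) u, m ≤ x s := fun u hu s hs =>
    hxm s ⟨by linarith [hs.1, hu.1], hs.2.trans hu.2⟩
  have hslope : ∀ s ∈ Icc (z - 1) z, -(K * (z - s)) ≤ x s := by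
    intro s hs
    have := hx.sub_le_integral (by linarith [hs.1]) hs.2 intervalIntegrable_const
      fun u hu => h2.apply_seg_le_yorkeR ha hx.1 (by linarith [hu.1, hs.1]) hm₁ hm₀
        (hseg u ⟨by linarith [hu.1, hs.1], hu.2.trans hzt⟩)
    rw [intervalIntegral.integral_const, smul_eq_mul] at this
    linarith
  set g : ℝ → ℝ := fun u => yorkeR a (max m (-K * max (z + 1 - u) 0))
  have hg : Continuous g := (continuousOn_yorkeR a).comp_continuous (by fun_prop)
    fun u => by rw [mem_Ioi]; exact hm₁.trans_le (le_max_left _ _)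
  have hramp : ∀ u, max m (-K * max (z + 1 - u) 0) ≤ 0 := fun u =>
    max_le hm₀ (by nlinarith [le_max_right (z + 1 - u) 0])
  have hfg : ∀ u ∈ Icc z t, f u (seg x u) ≤ g u := by
    intro u hu
    refine h2.apply_seg_le_yorkeR ha hx.1 (by linarith [hu.1]) (hm₁.trans_le (le_max_left _ _))
      (hramp u) fun s hs => max_le (hseg u ⟨by linarith [hu.1], hu.2⟩ s hs) ?_
    rcases le_or_gt s z with hsz | hsz
    · calc -K * max (z + 1 - u) 0 ≤ -(K * (z - s)) := by
            nlinarith [le_max_left (z + 1 - u) 0, hs.1]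
        _ ≤ x s := hslope s ⟨by linarith [hs.1, hu.1], hsz⟩
    · exact le_trans (by nlinarith [le_max_right (z + 1 - u) 0])
        (hpos s ⟨hsz.le, hs.2.trans hu.2⟩)
  have hg_tail : ∫ u in z..t, g u ≤ ∫ u in z..z + 1, g u :=
    integral_le_of_nonneg_of_eq_zero_on_Ici hg hzt
      (fun u _ => yorkeR_nonneg ha (hm₁.trans_le (le_max_left _ _)) (hramp u))
      fun u hu => by simp [g, max_eq_right (sub_nonpos.2 hu), max_eq_right hm₀, yorkeR_zero]
  calc x t = x t - x z := by rw [hxz, sub_zero]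
    _ ≤ ∫ u in z..t, g u :=
        hx.sub_le_integral (by linarith) hzt (hg.intervalIntegrable _ _) hfg
    _ ≤ ∫ u in z..z + 1, g u := hg_tail
    _ = ∫ v in (0:ℝ)..1, yorkeR a (max m (-K * v)) :=
        integral_comp_max_sub_zero (fun v => yorkeR a (max m (-K * v))) z

lemma eventually_integral_yorkeR_ramp_le (hx : IsGlobalSol f α x) (h2 : HypH2 f a 1)
    (ha : a ≤ 0) {M : ℝ} (hM : 0 ≤ M) (hle : ∀ᶠ t in atTop, x t ≤ M)
    (hfreq : ∃ᶠ t in atTop, 0 ≤ x t) :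
    ∀ᶠ t in atTop, ∫ v in (0:ℝ)..1, yorkeR a (-yorkeR a M * v) ≤ x t := by
  obtain ⟨T, hT⟩ := eventually_atTop.1 hle
  obtain ⟨s, hs, hTs⟩ :=
    (hfreq.and_eventually (eventually_ge_atTop (max T (α + 1) + 2))).exists
  have hTs' := le_max_left T (α + 1)
  have hαs := le_max_right T (α + 1)
  filter_upwards [eventually_ge_atTop s] with t hst
  rcases le_or_gt 0 (x t) with ht | ht
  · exact (integral_yorkeR_nonpos ha (neg_nonneg.2 (yorkeR_nonpos ha hM))).trans ht
  obtain ⟨z, hz, hxz, hneg⟩ := exists_eq_zero_forall_nonpos_Icc hst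
    (hx.1.mono fun u hu => by rw [mem_Ici]; linarith [hu.1]) hs ht.le
  exact hx.integral_yorkeR_ramp_le h2 ha hM (by linarith [hz.1]) hz.2
    (fun u hu => hT u (by linarith [hu.1, hz.1])) hxz hneg

lemma eventually_le_integral_yorkeR_max_ramp (hx : IsGlobalSol f α x) (h2 : HypH2 f a 1)
    (ha : a ≤ 0) {m : ℝ} (hm₁ : -1 < m) (hm₀ : m ≤ 0) (hle : ∀ᶠ t in atTop, m ≤ x t)
    (hfreq : ∃ᶠ t in atTop, x t ≤ 0) :
    ∀ᶠ t in atTop, x t ≤ ∫ v in (0:ℝ)..1, yorkeR a (max m (-yorkeR a m * v)) := by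
  obtain ⟨T, hT⟩ := eventually_atTop.1 hle
  obtain ⟨s, hs, hTs⟩ :=
    (hfreq.and_eventually (eventually_ge_atTop (max T (α + 1) + 2))).exists
  have hTs' := le_max_left T (α + 1)
  have hαs := le_max_right T (α + 1)
  filter_upwards [eventually_ge_atTop s] with t hst
  rcases le_or_gt (x t) 0 with ht | ht
  · exact ht.trans (integral_yorkeR_max_nonneg ha hm₁ hm₀ (yorkeR_nonneg ha hm₁ hm₀))
  obtain ⟨z, hz, hxz, hpos⟩ := exists_eq_zero_forall_nonpos_Icc (x := fun u => -x u) hst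
    (hx.1.neg.mono fun u hu => by rw [mem_Ici]; linarith [hu.1])
    (neg_nonneg.2 hs) (neg_nonpos.2 ht.le)
  exact hx.le_integral_yorkeR_max_ramp h2 ha hm₁ hm₀ (by linarith [hz.1]) hz.2
    (fun u hu => hT u (by linarith [hu.1, hz.1])) (neg_eq_zero.1 hxz)
    fun u hu => neg_nonpos.1 (hpos u hu)

end IsGlobalSol

theorem limsup_upper_bounds_general
    (f : ℝ → (ℝ → ℝ) → ℝ) (a : ℝ)
    (ha₁ : -(3 / 2) ≤ a) (ha₂ : a < 0)
    (h2 : HypH2 f a 1)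
    (r R : ℝ → ℝ) (hr : ∀ x : ℝ, r x = a * x / (1 + x))
    (c₁ c₂ : ℝ) (hc₁ : c₁ = a + 1 / 2) (hc₂ : c₂ = -(2 * a + 1 / 3))
    (hR : ∀ x : ℝ, R x = c₁ ^ 2 * x / (c₁ - (c₂ / 2) * x))
    (α : ℝ) (x : ℝ → ℝ) (hx : IsGlobalSol f α x)
    (hxbdd₁ : IsBoundedUnder (· ≤ ·) atTop x)
    (hxbdd₂ : IsBoundedUnder (· ≥ ·) atTop x)
    (m M : ℝ) (hm : m = liminf x atTop) (hM : M = limsup x atTop)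
    (hm0 : m < 0) (hM0 : 0 < M) :
    M ≤ r m ∧ (a ≤ -(5 / 4) → M < R m) := by
  have hm_low : -a ^ 2 / (2 - a) ≤ m := by
    have hev := hx.eventually_integral_yorkeR_ramp_le h2 ha₂.le (M := M + 1) (by linarith)
      ((eventually_lt_of_limsup_lt (hM ▸ by linarith) hxbdd₁).mono fun _ => le_of_lt)
      ((frequently_lt_of_lt_limsup hxbdd₂.isCoboundedUnder_le (hM ▸ hM0)).mono
        fun _ => le_of_lt)
    exact (neg_sq_div_le_integral_yorkeR_ramp ha₂.le (by linarith)).trans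
      (hm ▸ le_liminf_of_le hxbdd₁.isCoboundedUnder_ge hev)
  have hm₁ : -1 < m := neg_one_lt_of_neg_sq_div_le (by linarith) (by linarith) hm_low
  have hMJ : ∀ m' ∈ Ioo (-1) m,
      M ≤ ∫ v in (0:ℝ)..1, yorkeR a (max m' (-yorkeR a m' * v)) := by
    intro m' hm'
    have hev := hx.eventually_le_integral_yorkeR_max_ramp h2 ha₂.le hm'.1 (by linarith [hm'.2])
      ((eventually_lt_of_lt_liminf (hm ▸ hm'.2) hxbdd₂).mono fun _ => le_of_lt)
      ((frequently_lt_of_liminf_lt hxbdd₁.isCoboundedUnder_ge (hm ▸ hm0)).mono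
        fun _ => le_of_lt)
    exact hM ▸ limsup_le_of_le hxbdd₂.isCoboundedUnder_le hev
  have h1m : 1 + m ≠ 0 := by linarith
  refine ⟨?_, fun ha₅ => ?_⟩
  · rw [hr]
    refine le_of_forall_Ioo_le_of_continuousAt (G := yorkeR a) hm₁
      (by unfold yorkeR; fun_prop (disch := exact h1m)) fun m' hm' =>
        (hMJ m' hm').trans (integral_yorkeR_max_le_yorkeR ha₂.le hm'.1 _)
  · rw [hR, hc₁, hc₂]
    refine lt_of_le_of_lt ?_ (yorkePsi_lt ha₁ ha₅ hm_low hm0)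
    refine le_of_forall_Ioo_le_of_continuousAt hm₁
      (by unfold yorkePsi; fun_prop (disch := exact h1m)) fun m' hm' => (hMJ m' hm').trans
        (integral_yorkeR_max_le_yorkePsi (by linarith) hm'.1 (by linarith [hm'.2]))

/-- Lemma 2.8: under (H1)-(H3) with b = 1 and a ∈ [-3/2, 0), for a solution with
m = liminf x < 0 < M = limsup x one has M ≤ r(m); moreover M < R(m) when
a ∈ [-3/2, -5/4], where R(x) = (A'(0))²x/(A'(0) - (A''(0)/2)x) with
A'(0) = a + 1/2, A''(0) = -(2a + 1/3). -/
theorem limsup_upper_bounds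
    (f : ℝ → (ℝ → ℝ) → ℝ) (θ : ℝ → ℝ) (a : ℝ)
    (ha₁ : -(3 / 2) ≤ a) (ha₂ : a < 0)
    (h1 : HypH1 f θ) (h2 : HypH2 f a 1) (h3 : HypH3 f)
    (r R : ℝ → ℝ) (hr : ∀ x : ℝ, r x = a * x / (1 + x))
    (c₁ c₂ : ℝ) (hc₁ : c₁ = a + 1 / 2) (hc₂ : c₂ = -(2 * a + 1 / 3))
    (hR : ∀ x : ℝ, R x = c₁ ^ 2 * x / (c₁ - (c₂ / 2) * x))
    (α : ℝ) (x : ℝ → ℝ) (hx : IsGlobalSol f α x)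
    (hxbdd₁ : IsBoundedUnder (· ≤ ·) atTop x)
    (hxbdd₂ : IsBoundedUnder (· ≥ ·) atTop x)
    (m M : ℝ) (hm : m = liminf x atTop) (hM : M = limsup x atTop)
    (hm0 : m < 0) (hM0 : 0 < M) :
    M ≤ r m ∧ (a ≤ -(5 / 4) → M < R m) :=
  limsup_upper_bounds_general f a ha₁ ha₂ h2 r R hr c₁ c₂ hc₁ hc₂ hR α x hx hxbdd₁ hxbdd₂ m M hm hM
    hm0 hM0
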